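/- Let B = ℂ[X,Y,Z,T,W]/(X²Y − X − Z² − T³), an integral domain, with x, y, z, t, w the residue classes of X, Y, Z, T, W. Then: (i) there is a unique ℂ-derivation δ of B with δ(x) = δ(t) = 0, δ(y) = 2z, δ(z) = x², δ(w) = 1, and δ is locally nilpotent; (ii) setting u = y − 2zw + x²w² and v = z − x²w, one has δ(u) = δ(v) = 0 and ker δ equals the ℂ-subalgebra A = ℂ[x, u, v, t] generated by x, u, v, t; (iii) the A-algebra homomorphism A[W'] → B sending the variable W' to w is an isomorphism, i.e. B is a polynomial ring in the slice w over A; and (iv) the ℂ-algebra homomorphism ℂ[X,U,V,T]/(X²U − X − V² − T³) → B sending X, U, V, T to x, u, v, t respectively is injective with image ker δ, so ker δ is isomorphic to the coordinate ring of the Koras–Russell threefold {X²U = X + V² + T³}. -/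

import Mathlib

open MvPolynomial

/-- `B = ℂ[X,Y,Z,T,W]/(X²Y − X − Z² − T³)`, with variables `X,Y,Z,T,W` indexed by
`0,1,2,3,4`. -/
abbrev B19 : Type :=
  MvPolynomial (Fin 5) ℂ ⧸ Ideal.span
    {(X 0 : MvPolynomial (Fin 5) ℂ) ^ 2 * X 1 - X 0 - (X 2) ^ 2 - (X 3) ^ 3}

/-- The coordinate ring of the Koras–Russell threefold `{X²U = X + V² + T³}`. -/
abbrev KR19 : Type :=
  MvPolynomial (Fin 4) ℂ ⧸ Ideal.span
    {(X 0 : MvPolynomial (Fin 4) ℂ) ^ 2 * X 1 - X 0 - (X 2) ^ 2 - (X 3) ^ 3}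

noncomputable def x19 : B19 := Ideal.Quotient.mk _ (X 0)
noncomputable def y19 : B19 := Ideal.Quotient.mk _ (X 1)
noncomputable def z19 : B19 := Ideal.Quotient.mk _ (X 2)
noncomputable def t19 : B19 := Ideal.Quotient.mk _ (X 3)
noncomputable def w19 : B19 := Ideal.Quotient.mk _ (X 4)

/-- `u = y − 2zw + x²w²`. -/
noncomputable def u19 : B19 := y19 - 2 * z19 * w19 + x19 ^ 2 * w19 ^ 2
/-- `v = z − x²w`. -/
noncomputable def v19 : B19 := z19 - x19 ^ 2 * w19

/-- The subalgebra `ℂ[x,u,v,t] ⊆ B`. -/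
noncomputable def A19 : Subalgebra ℂ B19 := Algebra.adjoin ℂ {x19, u19, v19, t19}

/-!
Send `x, u, v, t` to the generators of the Koras–Russell ring `KR = ℂ[X,U,V,T]/(X²U − X − V² − T³)`
and `w` to a new variable `W`. Since `y = u + 2vw + x²w²` and `z = v + x²w`, and the defining
relation of `B` becomes `x²u − x − v² − t³ = 0`, this is an isomorphism `B ≃ KR[W]`. Under it `δ`
is `d/dW`, which is locally nilpotent (it lowers degrees), has kernel the constants `KR` (in
characteristic zero), and `W` is a slice over it. All four claims follow.
-/

open scoped Polynomial

namespace Derivation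

variable {R A B : Type*} [CommSemiring R] [CommRing A] [CommRing B] [Algebra R A] [Algebra R B]

def transfer (e : A ≃ₐ[R] B) (D : Derivation R B B) : Derivation R A A :=
  Derivation.mk' ((e.symm.toLinearMap : B →ₗ[R] A) ∘ₗ (D : B →ₗ[R] B) ∘ₗ e.toLinearMap)
    fun a b => by simp

variable (e : A ≃ₐ[R] B) (D : Derivation R B B)

@[simp]
lemma transfer_apply (a : A) : D.transfer e a = e.symm (D (e a)) := rfl

lemma transfer_pow_apply (n : ℕ) (a : A) :
    ((D.transfer e : A →ₗ[R] A) ^ n) a = e.symm (((D : B →ₗ[R] B) ^ n) (e a)) := by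
  induction n generalizing a with
  | zero => simp
  | succ n ih => simp [pow_succ, ih]

lemma ext_of_apply_mk_X {R σ M : Type*} [CommRing R] {I : Ideal (MvPolynomial σ R)}
    [AddCommGroup M] [Module R M] [Module (MvPolynomial σ R ⧸ I) M]
    [IsScalarTower R (MvPolynomial σ R ⧸ I) M] {D₁ D₂ : Derivation R (MvPolynomial σ R ⧸ I) M}
    (h : ∀ i, D₁ (Ideal.Quotient.mk I (X i)) = D₂ (Ideal.Quotient.mk I (X i))) : D₁ = D₂ := by
  refine ext_of_adjoin_eq_top (Set.range fun i => Ideal.Quotient.mkₐ R I (X i)) ?_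
    (Set.forall_mem_range.2 h)
  rw [Algebra.adjoin_range_eq_range_aeval, ← Function.comp_def, ← MvPolynomial.aeval_unique,
    AlgHom.range_eq_top]
  exact Ideal.Quotient.mkₐ_surjective R I

end Derivation

namespace Polynomial

section Derivative

variable (k P : Type*) [CommSemiring k] [CommRing P] [Algebra k P]

noncomputable abbrev derivativeDerivation : Derivation k P[X] P[X] :=
  (derivative' : Derivation P P[X] P[X]).restrictScalars k

lemma derivativeDerivation_pow_apply (n : ℕ) (p : P[X]) :
    ((derivativeDerivation k P : P[X] →ₗ[k] P[X]) ^ n) p = derivative^[n] p := by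
  induction n generalizing p with
  | zero => rfl
  | succ n ih => rw [pow_succ, Module.End.mul_apply, ih, Function.iterate_succ_apply]; rfl

lemma derivativeDerivation_eq_zero_iff [IsAddTorsionFree P] (p : P[X]) :
    derivativeDerivation k P p = 0 ↔ ∃ a, p = C a :=
  ⟨fun h => ⟨_, eq_C_of_derivative_eq_zero h⟩, by rintro ⟨a, rfl⟩; exact derivative_C⟩

end Derivative

open Derivation

variable {k P B : Type*} [CommSemiring k] [CommRing P] [Algebra k P] [CommRing B] [Algebra k B]
  (e : B ≃ₐ[k] P[X])

lemma exists_pow_transfer_derivativeDerivation_apply_eq_zero (b : B) :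
    ∃ n, (((derivativeDerivation k P).transfer e : B →ₗ[k] B) ^ n) b = 0 :=
  ⟨(e b).natDegree + 1, by
    rw [transfer_pow_apply, derivativeDerivation_pow_apply,
      iterate_derivative_eq_zero (Nat.lt_succ_self _), map_zero]⟩

lemma transfer_derivativeDerivation_eq_zero_iff [IsAddTorsionFree P] (b : B) :
    (derivativeDerivation k P).transfer e b = 0 ↔ ∃ a, e b = C a := by
  rw [transfer_apply, EmbeddingLike.map_eq_zero_iff, derivativeDerivation_eq_zero_iff]

lemma bijective_aeval_symm_X (A : Subalgebra k B) (hA : ∀ b, b ∈ A ↔ ∃ a, e b = C a) :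
    Function.Bijective (aeval (e.symm X) : A[X] →ₐ[A] B) := by
  let g : A →+* P := constantCoeff.comp ((e : B →+* P[X]).comp (algebraMap A B))
  have e_coe (a : A) : e a = C (g a) := by
    obtain ⟨c, hc⟩ := (hA a).1 a.2
    simp [g, hc]
  have e_aeval (p : A[X]) : e (aeval (e.symm X) p) = p.map g := by
    induction p using Polynomial.induction_on' with
    | add p q hp hq => simp [hp, hq]
    | monomial n a => simp [e_coe, ← C_mul_X_pow_eq_monomial]
  have g_injective : Function.Injective g := fun a a' h =>
    Subtype.ext (e.injective (by rw [e_coe, e_coe, h]))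
  have g_surjective : Function.Surjective g := fun c =>
    ⟨⟨e.symm (C c), (hA _).2 ⟨c, by simp⟩⟩, by simp [g]⟩
  have aeval_eq : ⇑(aeval (e.symm X) : A[X] →ₐ[A] B) = e.symm ∘ map g := by
    ext p
    simp [← e_aeval]
  rw [aeval_eq]
  exact e.symm.bijective.comp ⟨map_injective g g_injective, map_surjective g g_surjective⟩

end Polynomial

section KorasRussell

open Polynomial (aevalTower)

noncomputable def kr19 (i : Fin 4) : KR19 := Ideal.Quotient.mk _ (X i)

lemma aeval_xuvt_relation :
    aeval ![x19, u19, v19, t19]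
      ((X 0 : MvPolynomial (Fin 4) ℂ) ^ 2 * X 1 - X 0 - X 2 ^ 2 - X 3 ^ 3) = 0 := by
  have h : x19 ^ 2 * y19 - x19 - z19 ^ 2 - t19 ^ 3 = 0 := by
    simp only [x19, y19, z19, t19, ← map_pow, ← map_mul, ← map_sub]
    exact Ideal.Quotient.mk_singleton_self _
  simp only [u19, v19, map_sub, map_mul, map_pow, aeval_X, Matrix.cons_val_zero,
    Matrix.cons_val_one, Matrix.cons_val]
  linear_combination h

lemma kr19_relation : kr19 0 ^ 2 * kr19 1 - kr19 0 - kr19 2 ^ 2 - kr19 3 ^ 3 = 0 := by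
  simp only [kr19, ← map_pow, ← map_mul, ← map_sub]
  exact Ideal.Quotient.mk_singleton_self _

instance : IsAddTorsionFree KR19 := .of_isTorsionFree ℂ KR19

noncomputable def krToB19 : KR19 →ₐ[ℂ] B19 :=
  Ideal.Quotient.liftₐ _ (aeval ![x19, u19, v19, t19]) fun _ ha =>
    (Ideal.span_singleton_le_iff_mem _).2 (RingHom.mem_ker.2 aeval_xuvt_relation) ha

lemma krToB19_mk (q : MvPolynomial (Fin 4) ℂ) :
    krToB19 (Ideal.Quotient.mk _ q) = aeval ![x19, u19, v19, t19] q :=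
  Ideal.Quotient.lift_mk _ _ _

/-- `w` becomes the variable and `x, u, v, t` the constants, which forces `y = u + 2vw + x²w²` and
`z = v + x²w`. -/
noncomputable def toPolynomialKR19 : B19 →ₐ[ℂ] KR19[X] :=
  Ideal.Quotient.liftₐ _
    (aeval ![Polynomial.C (kr19 0),
      Polynomial.C (kr19 1) + 2 * Polynomial.C (kr19 2) * Polynomial.X +
        Polynomial.C (kr19 0) ^ 2 * Polynomial.X ^ 2,
      Polynomial.C (kr19 2) + Polynomial.C (kr19 0) ^ 2 * Polynomial.X,
      Polynomial.C (kr19 3), Polynomial.X])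
    fun _ ha => (Ideal.span_singleton_le_iff_mem _).2 (RingHom.mem_ker.2 (by
      have := congrArg Polynomial.C kr19_relation
      simp only [map_sub, map_mul, map_pow, map_zero] at this
      simp only [map_sub, map_mul, map_pow, aeval_X, Matrix.cons_val_zero, Matrix.cons_val_one,
        Matrix.cons_val]
      linear_combination this)) ha

lemma toPolynomialKR19_mk (p : MvPolynomial (Fin 5) ℂ) :
    toPolynomialKR19 (Ideal.Quotient.mk _ p) = aeval ![Polynomial.C (kr19 0),
      Polynomial.C (kr19 1) + 2 * Polynomial.C (kr19 2) * Polynomial.X +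
        Polynomial.C (kr19 0) ^ 2 * Polynomial.X ^ 2,
      Polynomial.C (kr19 2) + Polynomial.C (kr19 0) ^ 2 * Polynomial.X,
      Polynomial.C (kr19 3), Polynomial.X] p :=
  Ideal.Quotient.lift_mk _ _ _

lemma toPolynomialKR19_x19 : toPolynomialKR19 x19 = Polynomial.C (kr19 0) := by
  simp [x19, toPolynomialKR19_mk]

lemma toPolynomialKR19_y19 :
    toPolynomialKR19 y19 = Polynomial.C (kr19 1) + 2 * Polynomial.C (kr19 2) * Polynomial.X +
      Polynomial.C (kr19 0) ^ 2 * Polynomial.X ^ 2 := by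
  simp [y19, toPolynomialKR19_mk]

lemma toPolynomialKR19_z19 :
    toPolynomialKR19 z19 = Polynomial.C (kr19 2) + Polynomial.C (kr19 0) ^ 2 * Polynomial.X := by
  simp [z19, toPolynomialKR19_mk]

lemma toPolynomialKR19_t19 : toPolynomialKR19 t19 = Polynomial.C (kr19 3) := by
  simp [t19, toPolynomialKR19_mk]

lemma toPolynomialKR19_w19 : toPolynomialKR19 w19 = Polynomial.X := by
  simp [w19, toPolynomialKR19_mk]

lemma toPolynomialKR19_u19 : toPolynomialKR19 u19 = Polynomial.C (kr19 1) := by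
  simp only [u19, map_add, map_sub, map_mul, map_pow, map_ofNat, toPolynomialKR19_x19,
    toPolynomialKR19_y19, toPolynomialKR19_z19, toPolynomialKR19_w19]
  ring

lemma toPolynomialKR19_v19 : toPolynomialKR19 v19 = Polynomial.C (kr19 2) := by
  simp only [v19, map_sub, map_mul, map_pow, toPolynomialKR19_x19, toPolynomialKR19_z19,
    toPolynomialKR19_w19]
  ring

lemma krToB19_kr19_zero : krToB19 (kr19 0) = x19 := by simp [kr19, krToB19_mk]
lemma krToB19_kr19_one : krToB19 (kr19 1) = u19 := by simp [kr19, krToB19_mk]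
lemma krToB19_kr19_two : krToB19 (kr19 2) = v19 := by simp [kr19, krToB19_mk]
lemma krToB19_kr19_three : krToB19 (kr19 3) = t19 := by simp [kr19, krToB19_mk]

lemma y19_eq : y19 = u19 + 2 * v19 * w19 + x19 ^ 2 * w19 ^ 2 := by rw [u19, v19]; ring
lemma z19_eq : z19 = v19 + x19 ^ 2 * w19 := by rw [v19]; ring

lemma KR19.algHom_ext {S : Type*} [Semiring S] [Algebra ℂ S] {f g : KR19 →ₐ[ℂ] S}
    (h0 : f (kr19 0) = g (kr19 0)) (h1 : f (kr19 1) = g (kr19 1))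
    (h2 : f (kr19 2) = g (kr19 2)) (h3 : f (kr19 3) = g (kr19 3)) : f = g :=
  Ideal.Quotient.algHom_ext ℂ <| MvPolynomial.algHom_ext fun i => by
    fin_cases i
    exacts [h0, h1, h2, h3]

lemma B19.algHom_ext {S : Type*} [Semiring S] [Algebra ℂ S] {f g : B19 →ₐ[ℂ] S}
    (hx : f x19 = g x19) (hy : f y19 = g y19) (hz : f z19 = g z19) (ht : f t19 = g t19)
    (hw : f w19 = g w19) : f = g :=
  Ideal.Quotient.algHom_ext ℂ <| MvPolynomial.algHom_ext fun i => by
    fin_cases i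
    exacts [hx, hy, hz, ht, hw]

lemma B19.derivation_ext {D₁ D₂ : Derivation ℂ B19 B19} (hx : D₁ x19 = D₂ x19)
    (hy : D₁ y19 = D₂ y19) (hz : D₁ z19 = D₂ z19) (ht : D₁ t19 = D₂ t19) (hw : D₁ w19 = D₂ w19) :
    D₁ = D₂ :=
  Derivation.ext_of_apply_mk_X fun i => by
    fin_cases i
    exacts [hx, hy, hz, ht, hw]

lemma toPolynomialKR19_comp_aevalTower :
    toPolynomialKR19.comp (aevalTower krToB19 w19) = AlgHom.id ℂ KR19[X] := by
  refine Polynomial.algHom_ext' (KR19.algHom_ext ?_ ?_ ?_ ?_) ?_ <;>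
    simp [krToB19_kr19_zero, krToB19_kr19_one, krToB19_kr19_two, krToB19_kr19_three,
      toPolynomialKR19_x19, toPolynomialKR19_u19, toPolynomialKR19_v19, toPolynomialKR19_t19,
      toPolynomialKR19_w19]

lemma aevalTower_comp_toPolynomialKR19 :
    (aevalTower krToB19 w19).comp toPolynomialKR19 = AlgHom.id ℂ B19 := by
  refine B19.algHom_ext ?_ ?_ ?_ ?_ ?_ <;>
    simp [toPolynomialKR19_x19, toPolynomialKR19_y19, toPolynomialKR19_z19,
      toPolynomialKR19_t19, toPolynomialKR19_w19, krToB19_kr19_zero, krToB19_kr19_one,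
      krToB19_kr19_two, krToB19_kr19_three, map_ofNat, ← y19_eq, ← z19_eq]

noncomputable def equivPolynomialKR19 : B19 ≃ₐ[ℂ] KR19[X] :=
  AlgEquiv.ofAlgHom _ _ toPolynomialKR19_comp_aevalTower aevalTower_comp_toPolynomialKR19

lemma equivPolynomialKR19_symm_C (a : KR19) :
    equivPolynomialKR19.symm (Polynomial.C a) = krToB19 a :=
  Polynomial.aevalTower_C _ _ _

lemma equivPolynomialKR19_symm_X : equivPolynomialKR19.symm Polynomial.X = w19 :=
  Polynomial.aevalTower_X _ _

lemma krToB19_range : krToB19.range = A19 := by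
  have range_xuvt : Set.range ![x19, u19, v19, t19] = {x19, u19, v19, t19} := by
    simp only [Matrix.range_cons, Matrix.range_empty, Set.union_empty, Set.singleton_union]
  have lift_comp : krToB19.comp (Ideal.Quotient.mkₐ ℂ _) = aeval ![x19, u19, v19, t19] :=
    Ideal.Quotient.liftₐ_comp _ _ _
  rw [A19, ← range_xuvt, Algebra.adjoin_range_eq_range_aeval, ← lift_comp, AlgHom.range_comp,
    (AlgHom.range_eq_top _).2 (Ideal.Quotient.mkₐ_surjective ℂ _), Algebra.map_top]

lemma krToB19_injective : Function.Injective krToB19 := fun a a' h =>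
  Polynomial.C_injective (by simpa [← equivPolynomialKR19_symm_C] using h)

lemma mem_A19_iff (b : B19) : b ∈ A19 ↔ ∃ a, equivPolynomialKR19 b = Polynomial.C a := by
  rw [← krToB19_range, AlgHom.mem_range]
  exact exists_congr fun a => by
    rw [← equivPolynomialKR19_symm_C, AlgEquiv.symm_apply_eq, eq_comm]

end KorasRussell

section Delta

open Polynomial (derivativeDerivation)

noncomputable def delta19 : Derivation ℂ B19 B19 :=
  Derivation.transfer equivPolynomialKR19 (derivativeDerivation ℂ KR19)

lemma delta19_apply (b : B19) :
    delta19 b = equivPolynomialKR19.symm (Polynomial.derivative (toPolynomialKR19 b)) := rfl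

lemma delta19_x19 : delta19 x19 = 0 := by
  rw [delta19_apply, toPolynomialKR19_x19, Polynomial.derivative_C, map_zero]
lemma delta19_u19 : delta19 u19 = 0 := by
  rw [delta19_apply, toPolynomialKR19_u19, Polynomial.derivative_C, map_zero]
lemma delta19_v19 : delta19 v19 = 0 := by
  rw [delta19_apply, toPolynomialKR19_v19, Polynomial.derivative_C, map_zero]
lemma delta19_t19 : delta19 t19 = 0 := by
  rw [delta19_apply, toPolynomialKR19_t19, Polynomial.derivative_C, map_zero]
lemma delta19_w19 : delta19 w19 = 1 := by
  rw [delta19_apply, toPolynomialKR19_w19, Polynomial.derivative_X, map_one]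

lemma delta19_z19 : delta19 z19 = x19 ^ 2 := by
  rw [z19_eq]
  simp [delta19_x19, delta19_v19, delta19_w19]

lemma delta19_y19 : delta19 y19 = 2 * z19 := by
  have delta19_two : delta19 2 = 0 := by exact_mod_cast delta19.map_natCast 2
  rw [y19_eq, z19_eq]
  simp only [map_add, Derivation.leibniz, Derivation.leibniz_pow, smul_eq_mul, delta19_two,
    delta19_x19, delta19_u19, delta19_v19, delta19_w19]
  ring

end Delta

set_option synthInstance.maxHeartbeats 1000000 in
/-- Let `B = ℂ[X,Y,Z,T,W]/(X²Y − X − Z² − T³)`.  (i) There is a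
unique ℂ-derivation `δ` of `B` with `δx = δt = 0`, `δy = 2z`, `δz = x²`, `δw = 1`,
and it is locally nilpotent; (ii) with `u = y − 2zw + x²w²`, `v = z − x²w` one has
`δu = δv = 0` and `ker δ = ℂ[x,u,v,t]`; (iii) `B` is a polynomial ring over
`A = ℂ[x,u,v,t]` in the slice `w` (the evaluation map `A[W'] → B`, `W' ↦ w`, is an
isomorphism); (iv) the ℂ-algebra map from the coordinate ring of the Koras–Russell
threefold `{X²U = X + V² + T³}` sending the generators to `x,u,v,t` is injective with
image `ker δ = A`. -/
theorem stmt19 :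
    ∃ δ : Derivation ℂ B19 B19,
      (δ x19 = 0 ∧ δ t19 = 0 ∧ δ y19 = 2 * z19 ∧ δ z19 = x19 ^ 2 ∧ δ w19 = 1) ∧
      (∀ δ' : Derivation ℂ B19 B19,
        (δ' x19 = 0 ∧ δ' t19 = 0 ∧ δ' y19 = 2 * z19 ∧ δ' z19 = x19 ^ 2 ∧
          δ' w19 = 1) → δ' = δ) ∧
      (∀ b : B19, ∃ n : ℕ, ((δ : B19 →ₗ[ℂ] B19) ^ n) b = 0) ∧
      (δ u19 = 0 ∧ δ v19 = 0) ∧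
      (∀ b : B19, δ b = 0 ↔ b ∈ A19) ∧
      Function.Bijective (Polynomial.aeval w19 : Polynomial ↥A19 →ₐ[↥A19] B19) ∧
      ∃ φ : KR19 →ₐ[ℂ] B19,
        (∀ q : MvPolynomial (Fin 4) ℂ,
          φ (Ideal.Quotient.mk _ q) = MvPolynomial.aeval ![x19, u19, v19, t19] q) ∧
        Function.Injective φ ∧ φ.range = A19 := by
  refine ⟨delta19, ⟨delta19_x19, delta19_t19, delta19_y19, delta19_z19, delta19_w19⟩,
    fun δ' ⟨hx, ht, hy, hz, hw⟩ => ?_,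
    Polynomial.exists_pow_transfer_derivativeDerivation_apply_eq_zero equivPolynomialKR19,
    ⟨delta19_u19, delta19_v19⟩, fun b => ?_, ?_, krToB19, krToB19_mk, krToB19_injective,
    krToB19_range⟩
  · exact B19.derivation_ext (hx.trans delta19_x19.symm) (hy.trans delta19_y19.symm)
      (hz.trans delta19_z19.symm) (ht.trans delta19_t19.symm) (hw.trans delta19_w19.symm)
  · rw [mem_A19_iff]
    exact Polynomial.transfer_derivativeDerivation_eq_zero_iff equivPolynomialKR19 b
  · rw [← equivPolynomialKR19_symm_X]
    exact Polynomial.bijective_aeval_symm_X equivPolynomialKR19 A19 mem_A19_iff
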